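/- Let N ∈ ℕ with N ≥ 2 and let γ satisfy the curve hypotheses with parameter N. Let p, q, r ∈ [1,∞], and suppose there is a constant C such that ‖Tf‖_{L^r_u L^q_x(ℝ²×[1,2])} ≤ C‖f‖_{L^p(ℝ²)} for all f ∈ L^p(ℝ²). Then 1/q ≤ 1/p (with the convention 1/∞ = 0). -/

import Mathlib

open MeasureTheory Filter Set
open scoped ENNReal NNReal

noncomputable section

/-- The averaging operator along the dilated plane curve `(u t, u γ(t))`:
`Tf(x,u) = ∫_0^1 f(x₁ - u t, x₂ - u γ(t)) dt`. -/
def Tavg (γ : ℝ → ℝ) (f : ℝ × ℝ → ℝ) (x : ℝ × ℝ) (u : ℝ) : ℝ :=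
  ∫ t in Set.Ioc (0 : ℝ) 1, f (x.1 - u * t, x.2 - u * γ t)

/-- The curve hypotheses with parameter `N`: `γ ∈ C^N((0,1])`, `γ(t) → 0` as `t → 0⁺`,
`γ` monotonic on `(0,1]`, with the lower bounds (i) for `j = 1,2` and the upper
bounds (ii) for `j = 1,…,N` on `|tʲ γ⁽ʲ⁾(t) / γ(t)|`. -/
def CurveHyp (γ : ℝ → ℝ) (N : ℕ) : Prop :=
  ContDiffOn ℝ N γ (Set.Ioc 0 1) ∧
  Filter.Tendsto γ (nhdsWithin 0 (Set.Ioi 0)) (nhds 0) ∧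
  (MonotoneOn γ (Set.Ioc 0 1) ∨ AntitoneOn γ (Set.Ioc 0 1)) ∧
  (∀ j : ℕ, 1 ≤ j → j ≤ 2 → ∃ C : ℝ, 0 < C ∧ ∀ t ∈ Set.Ioc (0 : ℝ) 1,
    C ≤ |t ^ j * iteratedDerivWithin j γ (Set.Ioc 0 1) t / γ t|) ∧
  (∀ j : ℕ, 1 ≤ j → j ≤ N → ∃ C : ℝ, 0 < C ∧ ∀ t ∈ Set.Ioc (0 : ℝ) 1,
    |t ^ j * iteratedDerivWithin j γ (Set.Ioc 0 1) t / γ t| ≤ C)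

/-- `ω := limsup_{t→0⁺} ln|γ(t)| / ln t`. -/
def curveOmega (γ : ℝ → ℝ) : ℝ :=
  Filter.limsup (fun t => Real.log |γ t| / Real.log t) (nhdsWithin 0 (Set.Ioi 0))

/-- The `L^q(μ)` norm (valued in `ℝ≥0∞`) of an `ℝ≥0∞`-valued function, with the
essential supremum when `q = ∞`. -/
def eLpNormENN {α : Type*} [MeasurableSpace α] (g : α → ℝ≥0∞) (q : ℝ≥0∞)
    (μ : Measure α) : ℝ≥0∞ :=
  if q = ∞ then essSup g μ else (∫⁻ a, g a ^ q.toReal ∂μ) ^ (1 / q.toReal)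


/-- The time-space mixed norm `‖F‖_{L^r_u L^q_x(ℝ² × [1,2])}`. -/
def mixedUX (r q : ℝ≥0∞) (F : ℝ × ℝ → ℝ → ℝ) : ℝ≥0∞ :=
  eLpNormENN (fun u => eLpNorm (fun x => F x u) q (volume : Measure (ℝ × ℝ))) r
    ((volume : Measure ℝ).restrict (Set.Icc 1 2))

/-!
Test the estimate on the indicator of the square `[-R, R]²`. Since `γ` is monotone and tends to
`0` at `0⁺`, `|γ| ≤ |γ 1|` on `(0, 1]`, so for every `u ∈ [1, 2]` the average `T` of this indicator
equals `1` on a box of area at least `R²` once `R ≥ 2 + 4 |γ 1|`. The estimate then gives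
`R^(2/q) ≲ R^(2/p)` for all large `R`, which forces `1/q ≤ 1/p`.
-/

lemma eLpNormENN_eq_eLpNorm {α : Type*} [MeasurableSpace α] (g : α → ℝ≥0∞) {r : ℝ≥0∞}
    (hr : r ≠ 0) (μ : Measure α) : eLpNormENN g r μ = eLpNorm g r μ := by
  unfold eLpNormENN
  split_ifs with hr_top
  · simp [hr_top, eLpNormEssSup]
  · simp [eLpNorm_eq_eLpNorm' hr hr_top, eLpNorm']

lemma le_eLpNorm_of_ae_le {α : Type*} [MeasurableSpace α] {μ : Measure α}
    [IsProbabilityMeasure μ] {g : α → ℝ≥0∞} {c r : ℝ≥0∞} (hr : r ≠ 0)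
    (hg : ∀ᵐ a ∂μ, c ≤ g a) : c ≤ eLpNorm g r μ :=
  calc c = eLpNorm (fun _ => c) r μ := by
        simp [eLpNorm_const c hr (IsProbabilityMeasure.ne_zero μ)]
    _ ≤ eLpNorm g r μ := eLpNorm_mono_enorm_ae (by simpa using hg)

lemma le_mixedUX_of_forall_le {F : ℝ × ℝ → ℝ → ℝ} {c r q : ℝ≥0∞} (hr : r ≠ 0)
    (hF : ∀ u ∈ Icc (1 : ℝ) 2, c ≤ eLpNorm (fun x => F x u) q volume) :
    c ≤ mixedUX r q F := by
  have : IsProbabilityMeasure ((volume : Measure ℝ).restrict (Icc 1 2)) := ⟨by norm_num⟩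
  rw [mixedUX, eLpNormENN_eq_eLpNorm _ hr]
  exact le_eLpNorm_of_ae_le hr ((ae_restrict_mem measurableSet_Icc).mono hF)

lemma MonotoneOn.nonneg_of_tendsto_nhdsGT_zero {γ : ℝ → ℝ} {b t : ℝ}
    (hγ : MonotoneOn γ (Ioc 0 b)) (hlim : Tendsto γ (nhdsWithin 0 (Ioi 0)) (nhds 0))
    (ht : t ∈ Ioc 0 b) : 0 ≤ γ t :=
  le_of_tendsto hlim <| by
    filter_upwards [Ioo_mem_nhdsGT ht.1] with s hs
    exact hγ ⟨hs.1, hs.2.le.trans ht.2⟩ ht hs.2.le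

lemma abs_le_abs_of_monotoneOn_of_tendsto {γ : ℝ → ℝ} {b t : ℝ}
    (hγ : MonotoneOn γ (Ioc 0 b) ∨ AntitoneOn γ (Ioc 0 b))
    (hlim : Tendsto γ (nhdsWithin 0 (Ioi 0)) (nhds 0)) (ht : t ∈ Ioc 0 b) :
    |γ t| ≤ |γ b| := by
  have hb : b ∈ Ioc 0 b := ⟨ht.1.trans_le ht.2, le_rfl⟩
  rcases hγ with hγ | hγ
  · rw [abs_of_nonneg (hγ.nonneg_of_tendsto_nhdsGT_zero hlim ht),
      abs_of_nonneg (hγ.nonneg_of_tendsto_nhdsGT_zero hlim hb)]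
    exact hγ ht hb ht.2
  · have hlim' : Tendsto (fun s => -γ s) (nhdsWithin 0 (Ioi 0)) (nhds 0) := by
      simpa using hlim.neg
    rw [← abs_neg (γ t), ← abs_neg (γ b),
      abs_of_nonneg (hγ.neg.nonneg_of_tendsto_nhdsGT_zero hlim' ht),
      abs_of_nonneg (hγ.neg.nonneg_of_tendsto_nhdsGT_zero hlim' hb)]
    exact neg_le_neg (hγ ht hb ht.2)

lemma le_of_eventually_rpow_le_mul_rpow {ι : Type*} {l : Filter ι} [l.NeBot] {f : ι → ℝ}
    (hf : Tendsto f l atTop) {a b K : ℝ} (h : ∀ᶠ i in l, f i ^ a ≤ K * f i ^ b) : a ≤ b := by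
  by_contra! hab
  have hgrow := (tendsto_rpow_atTop (sub_pos.2 hab)).comp hf
  obtain ⟨i, hi, hKi, hpos⟩ :=
    (h.and ((hgrow.eventually_gt_atTop K).and (hf.eventually_gt_atTop 0))).exists
  have hsplit : f i ^ a = f i ^ (a - b) * f i ^ b := by
    rw [← Real.rpow_add hpos, sub_add_cancel]
  have := Real.rpow_pos_of_pos hpos b
  simp only [Function.comp_apply] at hKi
  nlinarith

lemma Tavg_eq_one_of_forall {γ : ℝ → ℝ} {f : ℝ × ℝ → ℝ} {x : ℝ × ℝ} {u : ℝ}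
    (hf : ∀ t ∈ Ioc (0 : ℝ) 1, f (x.1 - u * t, x.2 - u * γ t) = 1) : Tavg γ f x u = 1 := by
  rw [Tavg, setIntegral_congr_fun measurableSet_Ioc hf]
  simp

lemma volume_Icc_prod_Icc (a b c d : ℝ) :
    volume (Icc a b ×ˢ Icc c d) = ENNReal.ofReal (b - a) * ENNReal.ofReal (d - c) := by
  rw [Measure.volume_eq_prod, Measure.prod_prod, Real.volume_Icc, Real.volume_Icc]

def centeredSquare (R : ℝ) : Set (ℝ × ℝ) := Icc (-R) R ×ˢ Icc (-R) R

lemma measurableSet_centeredSquare (R : ℝ) : MeasurableSet (centeredSquare R) :=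
  measurableSet_Icc.prod measurableSet_Icc

lemma volume_centeredSquare {R : ℝ} (hR : 0 ≤ R) :
    volume (centeredSquare R) = ENNReal.ofReal (4 * R ^ 2) := by
  rw [centeredSquare, volume_Icc_prod_Icc, ← ENNReal.ofReal_mul (by linarith)]
  ring_nf

lemma memLp_indicator_centeredSquare {R : ℝ} (hR : 0 ≤ R) (p : ℝ≥0∞) :
    MemLp ((centeredSquare R).indicator fun _ => (1 : ℝ)) p volume :=
  memLp_indicator_const p (measurableSet_centeredSquare R) 1
    (Or.inr ((volume_centeredSquare hR).trans_ne ENNReal.ofReal_ne_top))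

lemma eLpNorm_indicator_centeredSquare_le {R : ℝ} (hR : 0 ≤ R) (p : ℝ≥0∞) :
    eLpNorm ((centeredSquare R).indicator fun _ => (1 : ℝ)) p volume
      ≤ ENNReal.ofReal (4 * R ^ 2) ^ (1 / p.toReal) := by
  simpa [volume_centeredSquare hR] using
    eLpNorm_indicator_const_le (1 : ℝ) p (μ := volume) (s := centeredSquare R)

lemma Tavg_indicator_centeredSquare_eq_one {γ : ℝ → ℝ} {M R u : ℝ} {x : ℝ × ℝ}
    (hγ : ∀ t ∈ Ioc (0 : ℝ) 1, |γ t| ≤ M) (hu : u ∈ Icc (1 : ℝ) 2)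
    (hx : x ∈ Icc (-R + 2) R ×ˢ Icc (-R + 2 * M) (R - 2 * M)) :
    Tavg γ ((centeredSquare R).indicator fun _ => 1) x u = 1 := by
  -- The dilated curve `u • (t, γ t)` stays in `(0, 2] × [-2M, 2M]`.
  refine Tavg_eq_one_of_forall fun t ht => indicator_of_mem ?_ _
  obtain ⟨⟨hx₁, hx₁'⟩, hx₂, hx₂'⟩ := hx
  have hut : 0 < u * t ∧ u * t ≤ 2 :=
    ⟨by nlinarith [hu.1, ht.1], by nlinarith [hu.1, hu.2, ht.1, ht.2]⟩
  have huγ : |u * γ t| ≤ 2 * M := by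
    rw [abs_mul, abs_of_pos (by linarith [hu.1])]
    nlinarith [hγ t ht, abs_nonneg (γ t), hu.2]
  rw [abs_le] at huγ
  exact ⟨⟨by linarith, by linarith⟩, by linarith, by linarith⟩

lemma ofReal_sq_rpow_le_mixedUX_Tavg_indicator {γ : ℝ → ℝ} {M R : ℝ} {r q : ℝ≥0∞}
    (hr : r ≠ 0) (hq₀ : q ≠ 0) (hq_top : q ≠ ∞) (hγ : ∀ t ∈ Ioc (0 : ℝ) 1, |γ t| ≤ M)
    (hR : 2 + 4 * M ≤ R) :
    ENNReal.ofReal (R ^ 2) ^ (1 / q.toReal)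
      ≤ mixedUX r q (Tavg γ ((centeredSquare R).indicator fun _ => 1)) := by
  set B := Icc (-R + 2) R ×ˢ Icc (-R + 2 * M) (R - 2 * M)
  have hM : 0 ≤ M := (abs_nonneg _).trans (hγ 1 ⟨one_pos, le_rfl⟩)
  refine le_mixedUX_of_forall_le hr fun u hu => ?_
  calc ENNReal.ofReal (R ^ 2) ^ (1 / q.toReal) ≤ volume B ^ (1 / q.toReal) := by
        gcongr
        rw [volume_Icc_prod_Icc, ← ENNReal.ofReal_mul (by linarith)]
        exact ENNReal.ofReal_le_ofReal (by nlinarith)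
    _ = eLpNorm (B.indicator fun _ => (1 : ℝ)) q volume := by
        rw [eLpNorm_indicator_const (measurableSet_Icc.prod measurableSet_Icc) hq₀ hq_top,
          enorm_one, one_mul]
    _ ≤ eLpNorm (fun x => Tavg γ ((centeredSquare R).indicator fun _ => 1) x u) q volume := by
        refine eLpNorm_mono fun x => ?_
        by_cases hx : x ∈ B
        · rw [indicator_of_mem hx, Tavg_indicator_centeredSquare_eq_one hγ hu hx]
        · simp [indicator_of_notMem hx]

lemma sq_rpow_le_of_timeSpace_estimate {γ : ℝ → ℝ} {M R C : ℝ} {p q r : ℝ≥0∞}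
    (hr : r ≠ 0) (hq₀ : q ≠ 0) (hq_top : q ≠ ∞) (hγ : ∀ t ∈ Ioc (0 : ℝ) 1, |γ t| ≤ M)
    (hR : 2 + 4 * M ≤ R)
    (hC : mixedUX r q (Tavg γ ((centeredSquare R).indicator fun _ => 1))
      ≤ ENNReal.ofReal C * eLpNorm ((centeredSquare R).indicator fun _ => (1 : ℝ)) p volume) :
    (R ^ 2) ^ (1 / q.toReal) ≤ C * 4 ^ (1 / p.toReal) * (R ^ 2) ^ (1 / p.toReal) := by
  have hM : 0 ≤ M := (abs_nonneg _).trans (hγ 1 ⟨one_pos, le_rfl⟩)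
  have hR₀ : 0 < R := by linarith
  have h := (ofReal_sq_rpow_le_mixedUX_Tavg_indicator hr hq₀ hq_top hγ hR).trans
    (hC.trans (mul_le_mul_right (eLpNorm_indicator_centeredSquare_le hR₀.le p) _))
  rw [ENNReal.ofReal_rpow_of_nonneg (by positivity) (by positivity),
    ENNReal.ofReal_rpow_of_nonneg (by positivity) (by positivity),
    ← ENNReal.ofReal_mul' (by positivity), ENNReal.ofReal_le_ofReal_iff'] at h
  rw [mul_assoc, ← Real.mul_rpow (by norm_num) (by positivity)]
  exact h.resolve_right (not_le.2 (by positivity))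

theorem timeSpace_necessity_I_general (N : ℕ) (γ : ℝ → ℝ) (h : CurveHyp γ N)
    (p q r : ℝ≥0∞) (hr : 1 ≤ r)
    (hbdd : ∃ C : ℝ, ∀ f : ℝ × ℝ → ℝ, MemLp f p volume →
      mixedUX r q (Tavg γ f) ≤ ENNReal.ofReal C * eLpNorm f p volume) :
    (q⁻¹).toReal ≤ (p⁻¹).toReal := by
  -- `q = 0` and `q = ∞` both give `(q⁻¹).toReal = 0`.
  rcases eq_or_ne q 0 with rfl | hq₀
  · simp
  rcases eq_or_ne q ∞ with rfl | hq_top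
  · simp
  obtain ⟨C, hC⟩ := hbdd
  obtain ⟨-, hlim, hmono, -, -⟩ := h
  have hγ : ∀ t ∈ Ioc (0 : ℝ) 1, |γ t| ≤ |γ 1| := fun t ht =>
    abs_le_abs_of_monotoneOn_of_tendsto hmono hlim ht
  rw [ENNReal.toReal_inv, ENNReal.toReal_inv, inv_eq_one_div, inv_eq_one_div]
  refine le_of_eventually_rpow_le_mul_rpow (tendsto_pow_atTop two_ne_zero)
    (K := C * 4 ^ (1 / p.toReal)) ?_
  filter_upwards [eventually_ge_atTop (2 + 4 * |γ 1|)] with R hR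
  have hR₀ : 0 ≤ R := by linarith [abs_nonneg (γ 1)]
  exact sq_rpow_le_of_timeSpace_estimate (one_pos.trans_le hr).ne' hq₀ hq_top hγ hR
    (hC _ (memLp_indicator_centeredSquare hR₀ p))

/-- Theorem 1.5, necessary condition (I): if the time-space estimate
`L^p_x → L^r_u L^q_x` holds for `T`, then `1/q ≤ 1/p`. -/
theorem timeSpace_necessity_I (N : ℕ) (hN : 2 ≤ N) (γ : ℝ → ℝ) (h : CurveHyp γ N)
    (p q r : ℝ≥0∞) (hp : 1 ≤ p) (hq : 1 ≤ q) (hr : 1 ≤ r)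
    (hbdd : ∃ C : ℝ, ∀ f : ℝ × ℝ → ℝ, MemLp f p volume →
      mixedUX r q (Tavg γ f) ≤ ENNReal.ofReal C * eLpNorm f p volume) :
    (q⁻¹).toReal ≤ (p⁻¹).toReal :=
  timeSpace_necessity_I_general N γ h p q r hr hbdd

end
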